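/- arXiv:1802.09462 — 2 statements merged into one kernel-verified Lean document; each statement's English description precedes it below -/
import Mathlib

section
/- Theorem (state convergence of LAC systems): Let ≺ be a strict partial order on a finite set U of operations and apply : S → U → S a state transition function such that any two ≺-incomparable operations commute (for all u v, ¬(u ≺ v) → ¬(v ≺ u) → ∀ s, apply (apply s u) v = apply (apply s v) u). Then any two linear extensions of ≺, viewed as duplicate-free enumerations l₁ and l₂ of U respecting ≺, satisfy List.foldl apply s0 l₁ = List.foldl apply s0 l₂ for every initial state s0. -/
/-!
Two linear extensions of `≺` are permutations of each other in which no operation is preceded by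
one of its `≺`-successors. Peel off the head `u` of the second enumeration: in the first one, every
operation `v` before `u` satisfies `¬ u ≺ v` (it comes earlier there) and `¬ v ≺ u` (it comes later
in the second one), so `u` commutes with it and can be moved to the front. Induct on the rest.
-/

namespace List

variable {α β : Type*}

theorem foldl_append_cons_of_commute (f : β → α → β) (u : α) (bs : List α) :
    ∀ (as : List α), (∀ v ∈ as, ∀ s, f (f s u) v = f (f s v) u) →
      ∀ s, foldl f s (as ++ u :: bs) = foldl f (f s u) (as ++ bs)
  | [], _, _ => rfl
  | a :: as, hcomm, s => by
    simp only [cons_append, foldl_cons, mem_cons, forall_eq_or_imp] at hcomm ⊢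
    rw [foldl_append_cons_of_commute f u bs as hcomm.2, hcomm.1]

theorem Perm.foldl_eq_of_pairwise {R : α → α → Prop} (f : β → α → β)
    (hcomm : ∀ u v, R u v → R v u → ∀ s, f (f s u) v = f (f s v) u) :
    ∀ {l₁ l₂ : List α}, l₁ ~ l₂ → l₁.Pairwise R → l₂.Pairwise R →
      ∀ s, foldl f s l₁ = foldl f s l₂
  | l₁, [], hp, _, _, _ => by rw [perm_nil.mp hp]
  | l₁, u :: t, hp, hR₁, hR₂, s => by
    obtain ⟨as, bs, rfl⟩ := append_of_mem (hp.mem_iff.mpr mem_cons_self)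
    have hu_comm : ∀ v ∈ as, ∀ s, f (f s u) v = f (f s v) u := by
      intro v hv
      rcases hp.subset (mem_append_left _ hv) with _ | ⟨_, hvt⟩
      · exact fun _ => rfl
      · exact hcomm u v ((pairwise_cons.mp hR₂).1 v hvt)
          ((pairwise_append.mp hR₁).2.2 v hv u mem_cons_self)
    rw [foldl_append_cons_of_commute f u bs as hu_comm, foldl_cons]
    exact Perm.foldl_eq_of_pairwise f hcomm (perm_middle.symm.trans hp).cons_inv
      (hR₁.sublist ((sublist_cons_self u bs).append_left as)) (pairwise_cons.mp hR₂).2 _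

theorem Nodup.pairwise_not_of_idxOf_lt [DecidableEq α] {r : α → α → Prop} {l : List α}
    (hl : l.Nodup) (hidx : ∀ u v, r u v → l.idxOf u < l.idxOf v) :
    l.Pairwise fun a b => ¬ r b a := by
  refine pairwise_iff_getElem.mpr fun i j hi hj hij hji => ?_
  have := hidx _ _ hji
  rw [hl.idxOf_getElem, hl.idxOf_getElem] at this
  omega

end List

theorem lac_state_convergence_general {U S : Type*} [DecidableEq U]
    (prec : U → U → Prop)
    (apply : S → U → S)
    (hcomm : ∀ u v, ¬ prec u v → ¬ prec v u → ∀ s,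
      apply (apply s u) v = apply (apply s v) u)
    (l₁ l₂ : List U)
    (h₁nodup : l₁.Nodup) (h₂nodup : l₂.Nodup)
    (h₁mem : ∀ u : U, u ∈ l₁) (h₂mem : ∀ u : U, u ∈ l₂)
    (h₁ext : ∀ u v, prec u v → l₁.idxOf u < l₁.idxOf v)
    (h₂ext : ∀ u v, prec u v → l₂.idxOf u < l₂.idxOf v)
    (s0 : S) :
    List.foldl apply s0 l₁ = List.foldl apply s0 l₂ := by
  have hperm : l₁.Perm l₂ :=
    (List.perm_ext_iff_of_nodup h₁nodup h₂nodup).mpr fun u => iff_of_true (h₁mem u) (h₂mem u)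
  exact hperm.foldl_eq_of_pairwise apply (fun u v hvu huv => hcomm u v huv hvu)
    (h₁nodup.pairwise_not_of_idxOf_lt h₁ext) (h₂nodup.pairwise_not_of_idxOf_lt h₂ext) s0

theorem lac_state_convergence {U S : Type*} [Fintype U] [DecidableEq U]
    (prec : U → U → Prop)
    (hIrrefl : ∀ u, ¬ prec u u)
    (hTrans : ∀ u v w, prec u v → prec v w → prec u w)
    (apply : S → U → S)
    (hcomm : ∀ u v, ¬ prec u v → ¬ prec v u → ∀ s,
      apply (apply s u) v = apply (apply s v) u)
    (l₁ l₂ : List U)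
    (h₁nodup : l₁.Nodup) (h₂nodup : l₂.Nodup)
    (h₁mem : ∀ u : U, u ∈ l₁) (h₂mem : ∀ u : U, u ∈ l₂)
    (h₁ext : ∀ u v, prec u v → l₁.idxOf u < l₁.idxOf v)
    (h₂ext : ∀ u v, prec u v → l₂.idxOf u < l₂.idxOf v)
    (s0 : S) :
    List.foldl apply s0 l₁ = List.foldl apply s0 l₂ :=
  lac_state_convergence_general prec apply hcomm l₁ l₂ h₁nodup h₂nodup h₁mem h₂mem h₁ext h₂ext s0
end

section
/- Commuting adjacent swaps suffice: if l₁ and l₂ are duplicate-free lists that are permutations of each other and both are linear extensions of a strict partial order ≺, then l₁ can be transformed into l₂ by adjacent transpositions each of which swaps two ≺-incomparable elements. -/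
/-- One adjacent transposition step swapping two prec-incomparable adjacent elements. -/
def IncompAdjSwap {U : Type*} (prec : U → U → Prop) (l l' : List U) : Prop :=
  ∃ (P Q : List U) (a b : U),
    l = P ++ [a, b] ++ Q ∧ l' = P ++ [b, a] ++ Q ∧ ¬ prec a b ∧ ¬ prec b a

/-!
Bring the head `a` of `l₂` to the front of `l₁` by swapping it leftwards. Every element it passes
precedes `a` in `l₁` and follows `a` in `l₂`, so as both lists are linear extensions it is
incomparable to `a`. Then recurse on the tails.
-/

namespace IncompAdjSwap

variable {U : Type*} {r : U → U → Prop}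

theorem cons {l l' : List U} (c : U) (h : IncompAdjSwap r l l') :
    IncompAdjSwap r (c :: l) (c :: l') := by
  obtain ⟨P, Q, a, b, rfl, rfl, hab, hba⟩ := h
  exact ⟨c :: P, Q, a, b, rfl, rfl, hab, hba⟩

theorem reflTransGen_cons {l l' : List U} (c : U)
    (h : Relation.ReflTransGen (IncompAdjSwap r) l l') :
    Relation.ReflTransGen (IncompAdjSwap r) (c :: l) (c :: l') :=
  h.lift (c :: ·) fun _ _ => cons c

theorem reflTransGen_append_cons (a : U) (Q : List U) :
    ∀ P : List U, (∀ b ∈ P, ¬ r a b ∧ ¬ r b a) →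
      Relation.ReflTransGen (IncompAdjSwap r) (P ++ a :: Q) (a :: (P ++ Q))
  | [], _ => .refl
  | b :: P, h => by
    have ⟨hab, hba⟩ := h b List.mem_cons_self
    have hswap : IncompAdjSwap r (b :: a :: (P ++ Q)) (a :: b :: (P ++ Q)) :=
      ⟨[], P ++ Q, b, a, rfl, rfl, hba, hab⟩
    exact (reflTransGen_cons b (reflTransGen_append_cons a Q P
      fun x hx => h x (List.mem_cons_of_mem b hx))).tail hswap

theorem reflTransGen_of_perm :
    ∀ {l₁ l₂ : List U}, l₁.Perm l₂ → l₁.Pairwise (fun u v => ¬ r v u) →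
      l₂.Pairwise (fun u v => ¬ r v u) → Relation.ReflTransGen (IncompAdjSwap r) l₁ l₂
  | l₁, [], hperm, _, _ => by rw [List.perm_nil.mp hperm]
  | l₁, a :: t, hperm, h₁, h₂ => by
    obtain ⟨P, Q, rfl⟩ := List.append_of_mem (hperm.mem_iff.mpr List.mem_cons_self)
    have htail : (P ++ Q).Perm t := (List.perm_middle.symm.trans hperm).cons_inv
    have hincomp : ∀ b ∈ P, ¬ r a b ∧ ¬ r b a := fun b hb =>
      ⟨(List.pairwise_append.mp h₁).2.2 b hb a List.mem_cons_self,
        (List.pairwise_cons.mp h₂).1 b (htail.subset (List.mem_append_left Q hb))⟩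
    have hsub : (P ++ Q).Sublist (P ++ a :: Q) := (List.sublist_cons_self a Q).append_left P
    have ih := reflTransGen_of_perm htail (h₁.sublist hsub) (List.pairwise_cons.mp h₂).2
    exact (reflTransGen_append_cons a Q P hincomp).trans (reflTransGen_cons a ih)

end IncompAdjSwap

theorem List.Nodup.pairwise_not_of_idxOf_lt_s13 {U : Type*} [DecidableEq U] {r : U → U → Prop}
    {l : List U} (hl : l.Nodup)
    (hext : ∀ u v, r u v → u ∈ l → v ∈ l → l.idxOf u < l.idxOf v) :
    l.Pairwise (fun u v => ¬ r v u) := by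
  rw [List.pairwise_iff_getElem]
  intro i j hi hj hij hji
  have := hext _ _ hji (l.getElem_mem hj) (l.getElem_mem hi)
  rw [hl.idxOf_getElem, hl.idxOf_getElem] at this
  omega

theorem linext_connected_by_incomparable_swaps_general {U : Type*} [DecidableEq U]
    (prec : U → U → Prop)
    (l₁ l₂ : List U) (hperm : l₁.Perm l₂)
    (h₁nodup : l₁.Nodup) (h₂nodup : l₂.Nodup)
    (h₁ext : ∀ u v, prec u v → u ∈ l₁ → v ∈ l₁ → l₁.idxOf u < l₁.idxOf v)
    (h₂ext : ∀ u v, prec u v → u ∈ l₂ → v ∈ l₂ → l₂.idxOf u < l₂.idxOf v) :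
    Relation.ReflTransGen (IncompAdjSwap prec) l₁ l₂ :=
  IncompAdjSwap.reflTransGen_of_perm hperm (h₁nodup.pairwise_not_of_idxOf_lt_s13 h₁ext)
    (h₂nodup.pairwise_not_of_idxOf_lt_s13 h₂ext)

theorem linext_connected_by_incomparable_swaps {U : Type*} [DecidableEq U]
    (prec : U → U → Prop)
    (hIrrefl : ∀ u, ¬ prec u u)
    (hTrans : ∀ u v w, prec u v → prec v w → prec u w)
    (l₁ l₂ : List U) (hperm : l₁.Perm l₂)
    (h₁nodup : l₁.Nodup) (h₂nodup : l₂.Nodup)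
    (h₁ext : ∀ u v, prec u v → u ∈ l₁ → v ∈ l₁ → l₁.idxOf u < l₁.idxOf v)
    (h₂ext : ∀ u v, prec u v → u ∈ l₂ → v ∈ l₂ → l₂.idxOf u < l₂.idxOf v) :
    Relation.ReflTransGen (IncompAdjSwap prec) l₁ l₂ :=
  linext_connected_by_incomparable_swaps_general prec l₁ l₂ hperm h₁nodup h₂nodup h₁ext h₂ext
end
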